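/- arXiv:2002.08892 — 4 statements merged into one kernel-verified Lean document; each statement's English description precedes it below -/
import Mathlib

section
/- With the straggler-resilient assignment as above (columns of A_R have b-weighted sums in [1, 1+δ]), let Y_j be an optimal set of k-median centers for the local dataset P_j, with weights w_j(c) = |cluster(c, P_j)|, and let (Y, w) be the union over j ∈ R with weights scaled by b_j. Then for any set of k centers C ⊆ ℝ^d: cost(P, C) − Σ_{j ∈ R} b_j · cost(P_j, Y_j) ≤ cost(Y, C, w) ≤ 2(1+δ) · cost(P, C), where cost uses the (unsquared) Euclidean distance to the closest center. -/
open Finset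

noncomputable def distToSet {d : ℕ} (p : EuclideanSpace ℝ (Fin d))
    (C : Finset (EuclideanSpace ℝ (Fin d))) : ℝ :=
  sInf ((fun c => dist p c) '' (C : Set (EuclideanSpace ℝ (Fin d))))

noncomputable def cost {d : ℕ} (P C : Finset (EuclideanSpace ℝ (Fin d))) : ℝ :=
  ∑ p ∈ P, distToSet p C

/-! Every point `x` of a local dataset `P_j` is charged to its local center `Y_j(x)`, so the
weighted summary cost is `Σ_j b_j Σ_{x ∈ P_j} d(Y_j(x), C)`. The triangle inequality through
`Y_j(x)` bounds `d(Y_j(x), C)` between `d(x, C) - d(x, Y_j)` and `d(x, Y_j) + d(x, C)`, and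
optimality of `Y_j` gives `cost(P_j, Y_j) ≤ cost(P_j, C)`. Summing with the weights `b_j`, the
covering condition turns `Σ_j b_j cost(P_j, C)` into a quantity between `cost(P, C)` and
`(1 + δ) cost(P, C)`. -/

section distToSet

variable {d : ℕ} {C : Finset (EuclideanSpace ℝ (Fin d))}

lemma distToSet_nonneg (p : EuclideanSpace ℝ (Fin d)) (C : Finset (EuclideanSpace ℝ (Fin d))) :
    0 ≤ distToSet p C :=
  Real.sInf_nonneg <| by rintro _ ⟨c, _, rfl⟩; exact dist_nonneg

lemma distToSet_le_dist (p : EuclideanSpace ℝ (Fin d)) {c : EuclideanSpace ℝ (Fin d)}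
    (hc : c ∈ C) : distToSet p C ≤ dist p c :=
  csInf_le ⟨0, by rintro _ ⟨_, _, rfl⟩; exact dist_nonneg⟩ ⟨c, hc, rfl⟩

lemma exists_mem_distToSet_eq_dist (p : EuclideanSpace ℝ (Fin d)) (hC : C.Nonempty) :
    ∃ c ∈ C, distToSet p C = dist p c := by
  obtain ⟨c, hc, h⟩ := (hC.to_set.image fun c => dist p c).csInf_mem
    (C.finite_toSet.image fun c => dist p c)
  exact ⟨c, hc, h.symm⟩

lemma distToSet_le_dist_add (p q : EuclideanSpace ℝ (Fin d)) (hC : C.Nonempty) :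
    distToSet p C ≤ dist p q + distToSet q C := by
  obtain ⟨c, hc, h⟩ := exists_mem_distToSet_eq_dist q hC
  calc distToSet p C ≤ dist p c := distToSet_le_dist p hc
    _ ≤ dist p q + dist q c := dist_triangle p q c
    _ = dist p q + distToSet q C := by rw [h]

end distToSet

lemma Finset.sum_card_fiber_mul {α β R : Type*} [DecidableEq β] [NonAssocSemiring R]
    {s : Finset α} {t : Finset β} {g : α → β} (hg : ∀ x ∈ s, g x ∈ t) (f : β → R) :
    ∑ y ∈ t, (#{x ∈ s | g x = y} : R) * f y = ∑ x ∈ s, f (g x) := by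
  simp_rw [← nsmul_eq_mul, ← sum_const]
  exact sum_fiberwise_of_maps_to' hg f

lemma Finset.sum_mul_sum_eq_sum_mul_of_subset {ι α R : Type*} [NonUnitalNonAssocSemiring R]
    {r : Finset ι} {s : ι → Finset α} {t : Finset α} [∀ x : α, DecidablePred fun j => x ∈ s j]
    (hs : ∀ j ∈ r, s j ⊆ t) (b : ι → R) (f : α → R) :
    ∑ j ∈ r, b j * ∑ x ∈ s j, f x = ∑ x ∈ t, (∑ j ∈ r with x ∈ s j, b j) * f x := by
  simp_rw [mul_sum, sum_mul]
  exact sum_comm' fun j x => by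
    simp only [mem_filter]
    exact ⟨fun h => ⟨⟨h.1, h.2⟩, hs j h.1 h.2⟩, fun h => h.1⟩

section cost

variable {d : ℕ} {S Y C : Finset (EuclideanSpace ℝ (Fin d))}
  {cl : EuclideanSpace ℝ (Fin d) → EuclideanSpace ℝ (Fin d)}

lemma cost_sub_cost_le_sum_distToSet (hcl : ∀ x ∈ S, dist x (cl x) = distToSet x Y)
    (hC : C.Nonempty) : cost S C - cost S Y ≤ ∑ x ∈ S, distToSet (cl x) C := by
  rw [cost, cost, ← sum_sub_distrib]
  refine sum_le_sum fun x hx => ?_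
  linarith [distToSet_le_dist_add x (cl x) hC, hcl x hx]

lemma sum_distToSet_le_cost_add_cost (hcl : ∀ x ∈ S, dist x (cl x) = distToSet x Y)
    (hC : C.Nonempty) : ∑ x ∈ S, distToSet (cl x) C ≤ cost S Y + cost S C := by
  rw [cost, cost, ← sum_add_distrib]
  refine sum_le_sum fun x hx => ?_
  linarith [distToSet_le_dist_add (cl x) x hC, dist_comm x (cl x), hcl x hx]

variable [DecidableEq (EuclideanSpace ℝ (Fin d))] {ι : Type*} {r : Finset ι}
  {P : Finset (EuclideanSpace ℝ (Fin d))} {Pl : ι → Finset (EuclideanSpace ℝ (Fin d))} {b : ι → ℝ}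

lemma cost_le_sum_mul_cost (hPl : ∀ j ∈ r, Pl j ⊆ P)
    (hcov : ∀ p ∈ P, 1 ≤ ∑ j ∈ r with p ∈ Pl j, b j) (C : Finset (EuclideanSpace ℝ (Fin d))) :
    cost P C ≤ ∑ j ∈ r, b j * cost (Pl j) C := by
  simp only [cost]
  rw [sum_mul_sum_eq_sum_mul_of_subset hPl]
  exact sum_le_sum fun p hp => le_mul_of_one_le_left (distToSet_nonneg p C) (hcov p hp)

lemma sum_mul_cost_le {c : ℝ} (hPl : ∀ j ∈ r, Pl j ⊆ P)
    (hcov : ∀ p ∈ P, ∑ j ∈ r with p ∈ Pl j, b j ≤ c) (C : Finset (EuclideanSpace ℝ (Fin d))) :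
    ∑ j ∈ r, b j * cost (Pl j) C ≤ c * cost P C := by
  simp only [cost]
  rw [sum_mul_sum_eq_sum_mul_of_subset hPl, mul_sum]
  exact sum_le_sum fun p hp => mul_le_mul_of_nonneg_right (hcov p hp) (distToSet_nonneg p C)

end cost

theorem kmedian_summary_sandwich_general {d k : ℕ} {ι : Type*}
    [DecidableEq (EuclideanSpace ℝ (Fin d))]
    (P : Finset (EuclideanSpace ℝ (Fin d)))
    (R : Finset ι) (Pl : ι → Finset (EuclideanSpace ℝ (Fin d)))
    (hPl : ∀ j ∈ R, Pl j ⊆ P)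
    (b : ι → ℝ) (δ : ℝ)
    (hb : ∀ j ∈ R, 0 ≤ b j)
    -- straggler-resilience: every point's total recovery weight lies in [1, 1+δ]
    (hcov : ∀ p ∈ P,
      1 ≤ ∑ j ∈ R.filter (fun j => p ∈ Pl j), b j ∧
      ∑ j ∈ R.filter (fun j => p ∈ Pl j), b j ≤ 1 + δ)
    -- Y j : optimal k-median centers of the local dataset Pl j
    (Y : ι → Finset (EuclideanSpace ℝ (Fin d)))
    (hYopt : ∀ j ∈ R, ∀ C' : Finset (EuclideanSpace ℝ (Fin d)),
      C'.card = k → C'.Nonempty → cost (Pl j) (Y j) ≤ cost (Pl j) C')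
    -- cl j x : the center of Y j closest to x (defining the clusters of Pl j)
    (cl : ι → EuclideanSpace ℝ (Fin d) → EuclideanSpace ℝ (Fin d))
    (hcl : ∀ j ∈ R, ∀ x ∈ Pl j,
      cl j x ∈ Y j ∧ dist x (cl j x) = distToSet x (Y j))
    (C : Finset (EuclideanSpace ℝ (Fin d))) (hCk : C.card = k) (hCne : C.Nonempty) :
    cost P C - (∑ j ∈ R, b j * cost (Pl j) (Y j)) ≤
      (∑ j ∈ R, b j * ∑ y ∈ Y j,
        (((Pl j).filter (fun x => cl j x = y)).card : ℝ) * distToSet y C) ∧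
    (∑ j ∈ R, b j * ∑ y ∈ Y j,
        (((Pl j).filter (fun x => cl j x = y)).card : ℝ) * distToSet y C) ≤
      2 * (1 + δ) * cost P C := by
  have hsummary : ∀ j ∈ R, ∑ y ∈ Y j,
      (((Pl j).filter (fun x => cl j x = y)).card : ℝ) * distToSet y C =
        ∑ x ∈ Pl j, distToSet (cl j x) C := fun j hj =>
    sum_card_fiber_mul (fun x hx => (hcl j hj x hx).1) _
  have hdist : ∀ j ∈ R, ∀ x ∈ Pl j, dist x (cl j x) = distToSet x (Y j) :=
    fun j hj x hx => (hcl j hj x hx).2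
  have hcost_le := cost_le_sum_mul_cost hPl (fun p hp => (hcov p hp).1) C
  have hsum_le := sum_mul_cost_le hPl (fun p hp => (hcov p hp).2) C
  constructor
  · calc cost P C - ∑ j ∈ R, b j * cost (Pl j) (Y j)
        ≤ ∑ j ∈ R, b j * (cost (Pl j) C - cost (Pl j) (Y j)) := by
          simp only [mul_sub, sum_sub_distrib]; linarith
      _ ≤ _ := sum_le_sum fun j hj => by
          rw [hsummary j hj]
          exact mul_le_mul_of_nonneg_left
            (cost_sub_cost_le_sum_distToSet (hdist j hj) hCne) (hb j hj)
  · calc _ ≤ ∑ j ∈ R, b j * (2 * cost (Pl j) C) := sum_le_sum fun j hj => by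
          rw [hsummary j hj]
          refine mul_le_mul_of_nonneg_left ?_ (hb j hj)
          linarith [sum_distToSet_le_cost_add_cost (hdist j hj) hCne, hYopt j hj C hCk hCne]
      _ = 2 * ∑ j ∈ R, b j * cost (Pl j) C := by rw [mul_sum]; simp only [mul_left_comm]
      _ ≤ 2 * (1 + δ) * cost P C := by linarith

/-- Lemma 3 (quality of the weighted summary): the union `Y` of the local optimal
`k`-median centers, with cluster-size weights rescaled by the recovery vector `b`,
satisfies `cost(P,C) - Σ_j b_j cost(P_j, Y_j) ≤ cost(Y,C,w) ≤ 2(1+δ) cost(P,C)`. -/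
theorem kmedian_summary_sandwich {d k : ℕ} {ι : Type*} [DecidableEq ι]
    [DecidableEq (EuclideanSpace ℝ (Fin d))]
    (P : Finset (EuclideanSpace ℝ (Fin d)))
    (R : Finset ι) (Pl : ι → Finset (EuclideanSpace ℝ (Fin d)))
    (hPl : ∀ j ∈ R, Pl j ⊆ P)
    (b : ι → ℝ) (δ : ℝ) (hδ : 0 < δ)
    (hb : ∀ j ∈ R, 0 ≤ b j)
    -- straggler-resilience: every point's total recovery weight lies in [1, 1+δ]
    (hcov : ∀ p ∈ P,
      1 ≤ ∑ j ∈ R.filter (fun j => p ∈ Pl j), b j ∧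
      ∑ j ∈ R.filter (fun j => p ∈ Pl j), b j ≤ 1 + δ)
    -- Y j : optimal k-median centers of the local dataset Pl j
    (Y : ι → Finset (EuclideanSpace ℝ (Fin d)))
    (hYk : ∀ j ∈ R, (Y j).card = k ∧ (Y j).Nonempty)
    (hYopt : ∀ j ∈ R, ∀ C' : Finset (EuclideanSpace ℝ (Fin d)),
      C'.card = k → C'.Nonempty → cost (Pl j) (Y j) ≤ cost (Pl j) C')
    -- cl j x : the center of Y j closest to x (defining the clusters of Pl j)
    (cl : ι → EuclideanSpace ℝ (Fin d) → EuclideanSpace ℝ (Fin d))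
    (hcl : ∀ j ∈ R, ∀ x ∈ Pl j,
      cl j x ∈ Y j ∧ dist x (cl j x) = distToSet x (Y j))
    (C : Finset (EuclideanSpace ℝ (Fin d))) (hCk : C.card = k) (hCne : C.Nonempty) :
    cost P C - (∑ j ∈ R, b j * cost (Pl j) (Y j)) ≤
      (∑ j ∈ R, b j * ∑ y ∈ Y j,
        (((Pl j).filter (fun x => cl j x = y)).card : ℝ) * distToSet y C) ∧
    (∑ j ∈ R, b j * ∑ y ∈ Y j,
        (((Pl j).filter (fun x => cl j x = y)).card : ℝ) * distToSet y C) ≤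
      2 * (1 + δ) * cost P C :=
  kmedian_summary_sandwich_general P R Pl hPl b δ hb hcov Y hYopt cl hcl C hCk hCne
end

section
/- Let P be redundantly distributed into local datasets P_i, i ∈ R, with nonnegative recovery coefficients b_i satisfying 1 ≤ Σ_{i∈R: p∈P_i} b_i ≤ 1+δ for every p ∈ P. Suppose for each i ∈ R, (S_i, w_i) is an ε-coreset for P_i (with respect to a nonnegative pointwise cost). Then S = ∪_{i∈R} S_i with weights w(c) = b_i · w_i(c) for c ∈ S_i is a 2(ε+δ)-coreset for P; concretely, for every center set C, (1 − 2ε − 2δ)·cost(P, C) ≤ cost(S, C, w) ≤ (1 + 2ε + 2δ)·cost(P, C). -/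
/-!
Weighting the local costs by the recovery coefficients and exchanging the order of summation,
`∑ᵢ bᵢ cost(Pᵢ, C) = ∑_{p ∈ P} (∑_{i : p ∈ Pᵢ} bᵢ) f(p, C)`, which lies between `cost(P, C)` and
`(1 + δ) cost(P, C)`. Each local coreset distorts its summand by a factor in `[1 - ε, 1 + ε]`, and
composing the two relative errors costs at most `2ε + 2δ` once `εδ ≤ ε + δ`.
-/

open Finset

theorem sum_mul_sum_eq_sum_sum_filter_mul {α ι M : Type*} [DecidableEq α]
    [NonUnitalNonAssocSemiring M] {P : Finset α} {R : Finset ι} {Pl : ι → Finset α}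
    (hPl : ∀ i ∈ R, Pl i ⊆ P) (b : ι → M) (g : α → M) :
    ∑ i ∈ R, b i * ∑ q ∈ Pl i, g q = ∑ q ∈ P, (∑ i ∈ R with q ∈ Pl i, b i) * g q := by
  simp_rw [mul_sum, sum_mul]
  exact sum_comm' fun i q => by
    simp only [mem_filter]
    exact ⟨fun h => ⟨h, hPl i h.1 h.2⟩, fun h => h.1⟩

section WeightedSum

variable {ι : Type*} {s : Finset ι} {b x y : ι → ℝ} {c : ℝ}

theorem mul_sum_mul_le_sum_mul (hb : ∀ i ∈ s, 0 ≤ b i) (h : ∀ i ∈ s, c * x i ≤ y i) :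
    c * ∑ i ∈ s, b i * x i ≤ ∑ i ∈ s, b i * y i := by
  rw [mul_sum]
  exact sum_le_sum fun i hi => by
    rw [mul_left_comm]
    exact mul_le_mul_of_nonneg_left (h i hi) (hb i hi)

theorem sum_mul_le_mul_sum_mul (hb : ∀ i ∈ s, 0 ≤ b i) (h : ∀ i ∈ s, y i ≤ c * x i) :
    ∑ i ∈ s, b i * y i ≤ c * ∑ i ∈ s, b i * x i := by
  rw [mul_sum]
  exact sum_le_sum fun i hi => by
    rw [mul_left_comm]
    exact mul_le_mul_of_nonneg_left (h i hi) (hb i hi)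

end WeightedSum

theorem relative_error_compose {K X Y ε δ : ℝ} (hε : 0 ≤ ε) (hεδ : ε * δ ≤ ε + δ)
    (hK : 0 ≤ K) (hX : K ≤ X ∧ X ≤ (1 + δ) * K) (hY : (1 - ε) * X ≤ Y ∧ Y ≤ (1 + ε) * X) :
    (1 - 2 * ε - 2 * δ) * K ≤ Y ∧ Y ≤ (1 + 2 * ε + 2 * δ) * K := by
  obtain ⟨hXlo, hXhi⟩ := hX
  obtain ⟨hYlo, hYhi⟩ := hY
  have hεX : ε * X ≤ ε * ((1 + δ) * K) := mul_le_mul_of_nonneg_left hXhi hε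
  have hεδK : ε * δ * K ≤ (ε + δ) * K := mul_le_mul_of_nonneg_right hεδ hK
  constructor <;> nlinarith

theorem combined_coreset_general {α 𝒞 : Type*} [DecidableEq α] {ι : Type*}
    -- nonnegative pointwise cost
    (f : α → 𝒞 → ℝ) (hf : ∀ q C, 0 ≤ f q C)
    (P : Finset α) (R : Finset ι) (Pl : ι → Finset α)
    (hPl : ∀ i ∈ R, Pl i ⊆ P)
    (b : ι → ℝ) (hb : ∀ i ∈ R, 0 ≤ b i)
    (ε δ : ℝ) (hε : 0 ≤ ε) (hεδ : ε * δ ≤ ε + δ)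
    -- straggler-resilience of the assignment
    (hcov : ∀ p ∈ P,
      1 ≤ ∑ i ∈ R.filter (fun i => p ∈ Pl i), b i ∧
      ∑ i ∈ R.filter (fun i => p ∈ Pl i), b i ≤ 1 + δ)
    -- local coresets: (S i, w i) is an ε-coreset for Pl i
    (S : ι → Finset α) (w : ι → α → ℝ)
    (hcore : ∀ i ∈ R, ∀ C : 𝒞,
      (1 - ε) * ∑ q ∈ Pl i, f q C ≤ ∑ c ∈ S i, w i c * f c C ∧
      ∑ c ∈ S i, w i c * f c C ≤ (1 + ε) * ∑ q ∈ Pl i, f q C) :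
    ∀ C : 𝒞,
      (1 - 2 * ε - 2 * δ) * ∑ q ∈ P, f q C ≤
          ∑ i ∈ R, b i * ∑ c ∈ S i, w i c * f c C ∧
      ∑ i ∈ R, b i * ∑ c ∈ S i, w i c * f c C ≤
          (1 + 2 * ε + 2 * δ) * ∑ q ∈ P, f q C := by
  intro C
  have hswap := sum_mul_sum_eq_sum_sum_filter_mul hPl b (f · C)
  have hlocal_lo : ∑ q ∈ P, f q C ≤ ∑ i ∈ R, b i * ∑ q ∈ Pl i, f q C := by
    rw [hswap]
    exact sum_le_sum fun q hq => le_mul_of_one_le_left (hf q C) (hcov q hq).1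
  have hlocal_hi : ∑ i ∈ R, b i * ∑ q ∈ Pl i, f q C ≤ (1 + δ) * ∑ q ∈ P, f q C := by
    rw [hswap, mul_sum]
    exact sum_le_sum fun q hq => mul_le_mul_of_nonneg_right (hcov q hq).2 (hf q C)
  exact relative_error_compose hε hεδ (sum_nonneg fun q _ => hf q C) ⟨hlocal_lo, hlocal_hi⟩
    ⟨mul_sum_mul_le_sum_mul hb fun i hi => (hcore i hi C).1,
      sum_mul_le_mul_sum_mul hb fun i hi => (hcore i hi C).2⟩

/-- Lemma 4: combining local `ε`-coresets using a straggler-resilient redundant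
assignment (recovery weights summing in `[1, 1+δ]` on each point) yields a
`2(ε+δ)`-coreset for the full dataset: for every candidate `C`,
`(1-2ε-2δ) cost(P,C) ≤ cost(S,C,w) ≤ (1+2ε+2δ) cost(P,C)`. -/
theorem combined_coreset {α 𝒞 : Type*} [DecidableEq α] {ι : Type*} [DecidableEq ι]
    -- nonnegative pointwise cost
    (f : α → 𝒞 → ℝ) (hf : ∀ q C, 0 ≤ f q C)
    (P : Finset α) (R : Finset ι) (Pl : ι → Finset α)
    (hPl : ∀ i ∈ R, Pl i ⊆ P)
    (b : ι → ℝ) (hb : ∀ i ∈ R, 0 ≤ b i)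
    (ε δ : ℝ) (hε : 0 ≤ ε) (hδ : 0 ≤ δ) (hεδ : ε * δ ≤ ε + δ)
    -- straggler-resilience of the assignment
    (hcov : ∀ p ∈ P,
      1 ≤ ∑ i ∈ R.filter (fun i => p ∈ Pl i), b i ∧
      ∑ i ∈ R.filter (fun i => p ∈ Pl i), b i ≤ 1 + δ)
    -- local coresets: (S i, w i) is an ε-coreset for Pl i
    (S : ι → Finset α) (w : ι → α → ℝ) (hw : ∀ i ∈ R, ∀ c ∈ S i, 0 ≤ w i c)
    (hcore : ∀ i ∈ R, ∀ C : 𝒞,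
      (1 - ε) * ∑ q ∈ Pl i, f q C ≤ ∑ c ∈ S i, w i c * f c C ∧
      ∑ c ∈ S i, w i c * f c C ≤ (1 + ε) * ∑ q ∈ Pl i, f q C) :
    ∀ C : 𝒞,
      (1 - 2 * ε - 2 * δ) * ∑ q ∈ P, f q C ≤
          ∑ i ∈ R, b i * ∑ c ∈ S i, w i c * f c C ∧
      ∑ i ∈ R, b i * ∑ c ∈ S i, w i c * f c C ≤
          (1 + 2 * ε + 2 * δ) * ∑ q ∈ P, f q C :=
  combined_coreset_general f hf P R Pl hPl b hb ε δ hε hεδ hcov S w hcore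
end

section
/- Relaxed-coreset combination: suppose for each i ∈ R and every r-dimensional linear subspace L ⊆ ℝ^d there exists Δ_i ≥ 0 (independent of L) with cost(P_i, L) ≤ cost(P̂_i, L) + Δ_i ≤ (1+δ)·cost(P_i, L). If the recovery coefficients b_i ≥ 0 satisfy 1 ≤ Σ_{i∈R: p∈P_i} b_i ≤ 1+δ for every p ∈ P, then with Y the weighted union of the P̂_i (weights b_i) and Δ = Σ_{i∈R} b_i Δ_i, for every r-dimensional subspace L: cost(P, L) ≤ cost(Y, L, w) + Δ ≤ (1+δ)²·cost(P, L) ≤ (1+4δ)·cost(P, L) (the last step assuming δ ≤ 2). -/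
open Finset

/-- Sum of squared distances from a finite dataset to a linear subspace. -/
noncomputable def subCost {d : ℕ} (P : Finset (EuclideanSpace ℝ (Fin d)))
    (L : Submodule ℝ (EuclideanSpace ℝ (Fin d))) : ℝ :=
  ∑ p ∈ P, (Metric.infDist p (L : Set (EuclideanSpace ℝ (Fin d)))) ^ 2

/-- Lemma 6 (combining relaxed coresets): if each `P̂_i` is a relaxed `δ`-coreset of
`P_i` with additive constants `Δ_i` independent of the subspace `L`, and the recovery
weights are straggler-resilient, then with `Δ = Σ b_i Δ_i`,
`cost(P,L) ≤ cost(Y,L,w) + Δ ≤ (1+δ)² cost(P,L) ≤ (1+4δ) cost(P,L)`. -/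
theorem relaxed_coreset_combination {d r : ℕ} {ι : Type*} [DecidableEq ι]
    [DecidableEq (EuclideanSpace ℝ (Fin d))]
    (P : Finset (EuclideanSpace ℝ (Fin d)))
    (R : Finset ι)
    (Pl Phat : ι → Finset (EuclideanSpace ℝ (Fin d)))
    (hPl : ∀ i ∈ R, Pl i ⊆ P)
    (b : ι → ℝ) (hb : ∀ i ∈ R, 0 ≤ b i)
    (δ : ℝ) (hδ0 : 0 < δ) (hδ2 : δ ≤ 2)
    (hcov : ∀ p ∈ P,
      1 ≤ ∑ i ∈ R.filter (fun i => p ∈ Pl i), b i ∧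
      ∑ i ∈ R.filter (fun i => p ∈ Pl i), b i ≤ 1 + δ)
    (Δ : ι → ℝ) (hΔ : ∀ i ∈ R, 0 ≤ Δ i)
    -- relaxed δ-coreset property of each P̂_i, with Δ_i independent of L
    (hrel : ∀ i ∈ R, ∀ L : Submodule ℝ (EuclideanSpace ℝ (Fin d)),
      Module.finrank ℝ L = r →
      subCost (Pl i) L ≤ subCost (Phat i) L + Δ i ∧
      subCost (Phat i) L + Δ i ≤ (1 + δ) * subCost (Pl i) L) :
    ∀ L : Submodule ℝ (EuclideanSpace ℝ (Fin d)), Module.finrank ℝ L = r →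
      subCost P L ≤ (∑ i ∈ R, b i * subCost (Phat i) L) + (∑ i ∈ R, b i * Δ i) ∧
      (∑ i ∈ R, b i * subCost (Phat i) L) + (∑ i ∈ R, b i * Δ i) ≤
        (1 + δ) ^ 2 * subCost P L ∧
      (1 + δ) ^ 2 * subCost P L ≤ (1 + 4 * δ) * subCost P L := by
  intro L hL
  set f : EuclideanSpace ℝ (Fin d) → ℝ :=
    fun p => (Metric.infDist p (L : Set (EuclideanSpace ℝ (Fin d)))) ^ 2 with hf
  have hf0 : ∀ p, 0 ≤ f p := fun p => sq_nonneg _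
  -- swap sums
  have hswap : ∑ i ∈ R, b i * subCost (Pl i) L
      = ∑ p ∈ P, (∑ i ∈ R.filter (fun i => p ∈ Pl i), b i) * f p := by
    have : ∀ i ∈ R, b i * subCost (Pl i) L
        = ∑ p ∈ P, (if p ∈ Pl i then b i * f p else 0) := by
      intro i hi
      rw [Finset.sum_ite_mem]
      have : P ∩ Pl i = Pl i := Finset.inter_eq_right.mpr (hPl i hi)
      rw [this, subCost, Finset.mul_sum]
    rw [Finset.sum_congr rfl this, Finset.sum_comm]
    refine Finset.sum_congr rfl fun p _ => ?_
    rw [Finset.sum_ite, Finset.sum_const_zero, add_zero, Finset.sum_mul]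
  have hcostP : subCost P L = ∑ p ∈ P, f p := rfl
  have hlow : subCost P L ≤ ∑ i ∈ R, b i * subCost (Pl i) L := by
    rw [hswap, hcostP]
    refine Finset.sum_le_sum fun p hp => ?_
    nlinarith [(hcov p hp).1, hf0 p]
  have hhigh : ∑ i ∈ R, b i * subCost (Pl i) L ≤ (1 + δ) * subCost P L := by
    rw [hswap, hcostP, Finset.mul_sum]
    refine Finset.sum_le_sum fun p hp => ?_
    nlinarith [(hcov p hp).2, hf0 p]
  have hPnn : 0 ≤ subCost P L := Finset.sum_nonneg fun p _ => sq_nonneg _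
  have hmid : ∑ i ∈ R, b i * subCost (Pl i) L
      ≤ (∑ i ∈ R, b i * subCost (Phat i) L) + (∑ i ∈ R, b i * Δ i) := by
    rw [← Finset.sum_add_distrib]
    refine Finset.sum_le_sum fun i hi => ?_
    rw [← mul_add]
    exact mul_le_mul_of_nonneg_left ((hrel i hi L hL).1) (hb i hi)
  have hmid2 : (∑ i ∈ R, b i * subCost (Phat i) L) + (∑ i ∈ R, b i * Δ i)
      ≤ (1 + δ) * ∑ i ∈ R, b i * subCost (Pl i) L := by
    rw [← Finset.sum_add_distrib, Finset.mul_sum]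
    refine Finset.sum_le_sum fun i hi => ?_
    rw [← mul_add]
    calc b i * (subCost (Phat i) L + Δ i)
        ≤ b i * ((1 + δ) * subCost (Pl i) L) :=
          mul_le_mul_of_nonneg_left ((hrel i hi L hL).2) (hb i hi)
      _ = (1 + δ) * (b i * subCost (Pl i) L) := by ring
  refine ⟨hlow.trans hmid, ?_, ?_⟩
  · calc (∑ i ∈ R, b i * subCost (Phat i) L) + (∑ i ∈ R, b i * Δ i)
        ≤ (1 + δ) * ∑ i ∈ R, b i * subCost (Pl i) L := hmid2
      _ ≤ (1 + δ) * ((1 + δ) * subCost P L) := by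
          exact mul_le_mul_of_nonneg_left hhigh (by linarith)
      _ = (1 + δ) ^ 2 * subCost P L := by ring
  · nlinarith
end

section
/- Weighted-centers upper bound (single machine): let Q ⊆ ℝ^d be finite and Y an optimal set of k-median centers for Q (i.e., cost(Q, Y) ≤ cost(Q, C) for every k-set C), with weights w_Y(y) = |cluster(y, Q)|, where the clusters form a partition of Q assigning each point to a closest center in Y. Then for every set of centers C ⊆ ℝ^d: cost(Y, C, w_Y) ≤ cost(Q, Y) + cost(Q, C) ≤ 2·cost(Q, C), where cost uses unsquared Euclidean distance. -/
open Finset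

/-- Weighted-centers upper bound (single machine): if `Y` is an optimal set of
`k`-median centers of `Q` with cluster-size weights, then for every set of `k`
centers `C`, `cost(Y, C, w_Y) ≤ cost(Q, Y) + cost(Q, C) ≤ 2 cost(Q, C)`. -/
theorem weighted_centers_upper {d k : ℕ}
    [DecidableEq (EuclideanSpace ℝ (Fin d))]
    (Q Y : Finset (EuclideanSpace ℝ (Fin d)))
    (hYk : Y.card = k) (hYne : Y.Nonempty)
    (hYopt : ∀ C' : Finset (EuclideanSpace ℝ (Fin d)),
      C'.card = k → C'.Nonempty → cost Q Y ≤ cost Q C')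
    -- `cl x` : a closest center in Y to x, defining the clusters of Q
    (cl : EuclideanSpace ℝ (Fin d) → EuclideanSpace ℝ (Fin d))
    (hcl : ∀ x ∈ Q, cl x ∈ Y ∧ dist x (cl x) = distToSet x Y)
    (C : Finset (EuclideanSpace ℝ (Fin d))) (hCk : C.card = k) (hCne : C.Nonempty) :
    (∑ y ∈ Y, ((Q.filter (fun x => cl x = y)).card : ℝ) * distToSet y C) ≤
        cost Q Y + cost Q C ∧
    cost Q Y + cost Q C ≤ 2 * cost Q C := by
  have hle : ∀ (p : EuclideanSpace ℝ (Fin d)) {c}, c ∈ C → distToSet p C ≤ dist p c := by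
    intro p c hc
    apply csInf_le
    · exact (Set.Finite.image _ (C.finite_toSet)).bddBelow
    · exact ⟨c, hc, rfl⟩
  have hex : ∀ (p : EuclideanSpace ℝ (Fin d)), ∃ c ∈ C, distToSet p C = dist p c := by
    intro p
    have hne : ((fun c => dist p c) '' (C : Set (EuclideanSpace ℝ (Fin d)))).Nonempty :=
      hCne.to_set.image _
    obtain ⟨c, hc, hceq⟩ := hne.csInf_mem (C.finite_toSet.image _)
    exact ⟨c, hc, hceq.symm⟩
  have htri : ∀ (p q : EuclideanSpace ℝ (Fin d)),
      distToSet p C ≤ dist p q + distToSet q C := by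
    intro p q
    obtain ⟨c, hc, hceq⟩ := hex q
    rw [hceq]
    exact le_trans (hle p hc) (by linarith [dist_triangle p q c])
  have h1 : (∑ y ∈ Y, ((Q.filter (fun x => cl x = y)).card : ℝ) * distToSet y C)
      = ∑ x ∈ Q, distToSet (cl x) C := by
    rw [← Finset.sum_fiberwise_of_maps_to (fun x hx => (hcl x hx).1)
      (fun x => distToSet (cl x) C)]
    refine Finset.sum_congr rfl fun y _ => ?_
    have heq : ∑ x ∈ Q.filter (fun x => cl x = y), distToSet (cl x) C
        = (Q.filter (fun x => cl x = y)).card • distToSet y C := by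
      rw [← Finset.sum_const]
      exact Finset.sum_congr rfl fun x hx => by rw [(Finset.mem_filter.mp hx).2]
    rw [heq, nsmul_eq_mul]
  have h2 : (∑ x ∈ Q, distToSet (cl x) C) ≤ cost Q Y + cost Q C := by
    rw [cost, cost, ← Finset.sum_add_distrib]
    refine Finset.sum_le_sum fun x hx => ?_
    calc distToSet (cl x) C ≤ dist (cl x) x + distToSet x C := htri _ _
    _ = distToSet x Y + distToSet x C := by rw [dist_comm, (hcl x hx).2]
  constructor
  · rw [h1]; exact h2
  · have := hYopt C hCk hCne
    linarith
end
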